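/- Suppose that W''₂₃ commutes with W'₁₃, and let Λ be a bounded operator on H⊗H such that Λ₁₃ commutes with W'₁₂. Let ζ, ξ, η ∈ H be unit vectors and set u := ζ⊗ξ⊗η ∈ H⊗H⊗H. Then |⟨Λ₁₃ W''₁₃W'₁₃W''₂₃W₂₃u, W''₁₃W'₁₃W''₂₃W₂₃u⟩ − ⟨Λ₁₃ W''₂₃W₂₃u, W''₂₃W₂₃u⟩| ≤ 2‖Λ‖ ( ‖W'₂₃*W₂₃u − u‖ + ‖W'₁₂u − u‖ + ‖W₂₃*W'₂₃u − u‖ ). -/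

import Mathlib

noncomputable section

open scoped ComplexConjugate InnerProductSpace

/-!
Conjugating the pentagon equation of `W` by the antiunitaries `J ⊗ J ⊗ J` and `J ⊗ J ⊗ Ĵ` of
`H ⊗ H ⊗ H` gives `W'₁₂ W'₁₃ W'₂₃ = W'₂₃ W'₁₂` and `W'₁₂ W''₁₃ W''₂₃ = W''₂₃ W'₁₂`. Together with
`W''₂₃ W'₁₃ = W'₁₃ W''₂₃` they move `v = W''₁₃ W'₁₃ W''₂₃ W₂₃ u` to `w = W'₁₂* W''₂₃ W₂₃ u` up to
three errors, each a unitary image of one of the three differences on the right-hand side. As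
`Λ₁₃` commutes with the unitary `W'₁₂`, `⟨Λ₁₃ w, w⟩ = ⟨Λ₁₃ W''₂₃ W₂₃ u, W''₂₃ W₂₃ u⟩`, and for unit
vectors `|⟨Λ₁₃ v, v⟩ - ⟨Λ₁₃ w, w⟩| ≤ 2 ‖Λ₁₃‖ ‖v - w‖`; finally `‖Λ₁₃‖ ≤ ‖Λ‖` because `X ↦ X₁₃` is a
`⋆`-homomorphism between C⋆-algebras.
-/

section HilbertSpace

variable {E F G : Type*} [NormedAddCommGroup E] [InnerProductSpace ℂ E]
  [NormedAddCommGroup F] [InnerProductSpace ℂ F] [NormedAddCommGroup G] [InnerProductSpace ℂ G]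

theorem inner_apply_apply_eq_of_dense_span {s : Set E}
    (hs : Dense (Submodule.span ℂ s : Set E)) {f g : E →L[ℂ] F} {f' g' : E →L[ℂ] G}
    (h : ∀ x ∈ s, ∀ y ∈ s, ⟪f x, g y⟫_ℂ = ⟪f' x, g' y⟫_ℂ) (x y : E) :
    ⟪f x, g y⟫_ℂ = ⟪f' x, g' y⟫_ℂ := by
  have hs_left : ∀ y ∈ s, ∀ x, ⟪f x, g y⟫_ℂ = ⟪f' x, g' y⟫_ℂ := fun y hy x =>
    congr($(ContinuousLinearMap.ext_on hs (f := ((innerSL ℂ).flip (g y)).comp f)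
      (g := ((innerSL ℂ).flip (g' y)).comp f') fun x hx => h x hx y hy) x)
  exact congr($(ContinuousLinearMap.ext_on hs (f := (innerSL ℂ (f x)).comp g)
    (g := (innerSL ℂ (f' x)).comp g') fun y hy => hs_left y hy x) y)

def conjLinearIsometry (f : E → F) (hadd : ∀ x y, f (x + y) = f x + f y)
    (hsmul : ∀ (c : ℂ) x, f (c • x) = conj c • f x) (hnorm : ∀ x, ‖f x‖ = ‖x‖) :
    E →ₗᵢ⋆[ℂ] F :=
  ⟨⟨⟨f, hadd⟩, hsmul⟩, hnorm⟩

@[simp]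
theorem conjLinearIsometry_apply (f : E → F) (hadd : ∀ x y, f (x + y) = f x + f y)
    (hsmul : ∀ (c : ℂ) x, f (c • x) = conj c • f x) (hnorm : ∀ x, ‖f x‖ = ‖x‖) (x : E) :
    conjLinearIsometry f hadd hsmul hnorm x = f x :=
  rfl

theorem LinearIsometry.inner_map_map_conj (K : E →ₗᵢ⋆[ℂ] F) (x y : E) :
    ⟪K x, K y⟫_ℂ = ⟪y, x⟫_ℂ := by
  have hI : ∀ z, K (Complex.I • z) = -(Complex.I • K z) := fun z => by
    rw [K.map_smulₛₗ, Complex.conj_I, neg_smul]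
  have h1 : K x - Complex.I • K y = K (x + Complex.I • y) := by
    rw [map_add, hI, sub_eq_add_neg]
  have h2 : K x + Complex.I • K y = K (x - Complex.I • y) := by
    rw [map_sub, hI, sub_neg_eq_add]
  have h3 : ‖y - Complex.I • x‖ = ‖x + Complex.I • y‖ := by
    rw [show y - Complex.I • x = -Complex.I • (x + Complex.I • y) by
      rw [smul_add, smul_smul, neg_mul, Complex.I_mul_I]; module, norm_smul, norm_neg,
      Complex.norm_I, one_mul]
  have h4 : ‖y + Complex.I • x‖ = ‖x - Complex.I • y‖ := by
    rw [show y + Complex.I • x = Complex.I • (x - Complex.I • y) by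
      rw [smul_sub, smul_smul, Complex.I_mul_I]; module, norm_smul, Complex.norm_I, one_mul]
  rw [inner_eq_sum_norm_sq_div_four, inner_eq_sum_norm_sq_div_four (𝕜 := ℂ) y x]
  simp only [RCLike.I_to_complex]
  rw [← map_add, ← map_sub, h1, h2, h3, h4, LinearIsometry.norm_map, LinearIsometry.norm_map,
    LinearIsometry.norm_map, LinearIsometry.norm_map, add_comm y x, ← norm_neg (y - x), neg_sub]

theorem exists_conjLinearIsometry_apply_eq [CompleteSpace F] {ι : Type*} {g : ι → E} {k : ι → F}
    (hg : Dense (Submodule.span ℂ (Set.range g) : Set E))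
    (hk : ∀ i j, ⟪k i, k j⟫_ℂ = ⟪g j, g i⟫_ℂ) :
    ∃ K : E →ₗᵢ⋆[ℂ] F, ∀ i, K (g i) = k i := by
  -- `∑ cᵢ gᵢ ↦ ∑ c̄ᵢ kᵢ` is well defined and isometric on the span because the Gram matrices of
  -- `g` and `k` are conjugate; it then extends by continuity.
  let π : (ι →₀ ℂ) →ₗ[ℂ] E := Finsupp.linearCombination ℂ g
  let ψ : (ι →₀ ℂ) →ₛₗ[conj] F :=
    Finsupp.lsum ℂ fun i => (LinearMap.toSpanSingleton ℂ F (k i)).comp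
      (starLinearEquiv ℂ : ℂ ≃ₗ⋆[ℂ] ℂ).toLinearMap
  have hψ : ∀ l, ψ l = l.sum fun i c => conj c • k i := fun l => rfl
  have hinner : ∀ l, ⟪ψ l, ψ l⟫_ℂ = ⟪π l, π l⟫_ℂ := by
    intro l
    simp only [hψ, π, Finsupp.linearCombination_apply, Finsupp.sum, sum_inner, inner_sum,
      inner_smul_left, inner_smul_right, hk, Complex.conj_conj, Finset.mul_sum]
    rw [Finset.sum_comm]
    simp only [mul_left_comm]
  have hnorm : ∀ l, ‖ψ l‖ = ‖π l‖ := fun l => by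
    rw [@norm_eq_sqrt_re_inner ℂ, @norm_eq_sqrt_re_inner ℂ, hinner]
  have hdense : DenseRange π := by
    rw [DenseRange, ← LinearMap.coe_range, Finsupp.range_linearCombination]
    exact hg
  have hbound : ∃ C, ∀ l, ‖ψ l‖ ≤ C * ‖π l‖ := ⟨1, fun l => by rw [one_mul, hnorm]⟩
  let K := ψ.extendOfNorm π
  have hKπ : ∀ l, K (π l) = ψ l := LinearMap.extendOfNorm_eq hdense hbound
  refine ⟨⟨K.toLinearMap, fun x => ?_⟩, fun i => ?_⟩
  · refine hdense.induction (fun _ ⟨l, hl⟩ => ?_) (isClosed_eq (by fun_prop) continuous_norm) x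
    rw [← hl]
    exact (congrArg norm (hKπ l)).trans (hnorm l)
  · have := hKπ (Finsupp.single i 1)
    simpa [π, hψ] using this

theorem pentagon_of_semiconj (K : E →ₗᵢ⋆[ℂ] F) {P Q R : F →L[ℂ] F} {P' Q' R' : E →L[ℂ] E}
    (hP : Function.Semiconj K P' P) (hQ : Function.Semiconj K Q' Q)
    (hR : Function.Semiconj K R' R) (h : P * Q * R = R * P) : P' * Q' * R' = R' * P' := by
  ext x
  apply K.injective
  simpa [hP.eq, hQ.eq, hR.eq] using congr($h (K x))

theorem norm_inner_map_self_sub_le (L : E →L[ℂ] E) (v w : E) :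
    ‖⟪L v, v⟫_ℂ - ⟪L w, w⟫_ℂ‖ ≤ ‖L‖ * ‖v - w‖ * (‖v‖ + ‖w‖) := by
  have hsplit : ⟪L v, v⟫_ℂ - ⟪L w, w⟫_ℂ = ⟪L (v - w), v⟫_ℂ + ⟪L w, v - w⟫_ℂ := by
    rw [map_sub, inner_sub_left, inner_sub_right]
    ring
  rw [hsplit]
  calc _ ≤ ‖L (v - w)‖ * ‖v‖ + ‖L w‖ * ‖v - w‖ :=
        (norm_add_le _ _).trans (add_le_add (norm_inner_le_norm _ _) (norm_inner_le_norm _ _))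
    _ ≤ ‖L‖ * ‖v - w‖ * ‖v‖ + ‖L‖ * ‖w‖ * ‖v - w‖ := by
        gcongr <;> exact L.le_opNorm _
    _ = ‖L‖ * ‖v - w‖ * (‖v‖ + ‖w‖) := by ring

end HilbertSpace

section HilbertTensor

variable {A B C AB BC E F : Type*}
  [NormedAddCommGroup A] [InnerProductSpace ℂ A] [NormedAddCommGroup B] [InnerProductSpace ℂ B]
  [NormedAddCommGroup C] [InnerProductSpace ℂ C] [NormedAddCommGroup AB] [InnerProductSpace ℂ AB]
  [NormedAddCommGroup BC] [InnerProductSpace ℂ BC]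
  [NormedAddCommGroup E] [InnerProductSpace ℂ E] [NormedAddCommGroup F] [InnerProductSpace ℂ F]

structure IsHilbertTensor (μ : A →L[ℂ] B →L[ℂ] E) : Prop where
  inner_apply_apply : ∀ a b a' b', ⟪μ a b, μ a' b'⟫_ℂ = ⟪a, a'⟫_ℂ * ⟪b, b'⟫_ℂ
  dense_span : Dense (Submodule.span ℂ (Set.range fun p : A × B => μ p.1 p.2) : Set E)

namespace IsHilbertTensor

variable {μ : A →L[ℂ] B →L[ℂ] E}

theorem norm_apply_apply (hμ : IsHilbertTensor μ) (a : A) (b : B) : ‖μ a b‖ = ‖a‖ * ‖b‖ := by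
  rw [@norm_eq_sqrt_re_inner ℂ, hμ.inner_apply_apply, inner_self_eq_norm_sq_to_K,
    inner_self_eq_norm_sq_to_K, ← mul_pow]
  norm_cast
  rw [Real.sqrt_sq (by positivity)]

theorem flip (hμ : IsHilbertTensor μ) : IsHilbertTensor μ.flip := by
  refine ⟨fun b a b' a' => by simp [hμ.inner_apply_apply, mul_comm], ?_⟩
  convert hμ.dense_span using 4
  ext x
  simp only [Set.mem_range, Prod.exists, ContinuousLinearMap.flip_apply]
  exact exists_comm

theorem ext {σ : ℂ →+* ℂ} (hμ : IsHilbertTensor μ) {f g : E →SL[σ] F}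
    (h : ∀ a b, f (μ a b) = g (μ a b)) : f = g :=
  ContinuousLinearMap.ext_on hμ.dense_span (by rintro _ ⟨p, rfl⟩; exact h p.1 p.2)

theorem of_assoc {τ : A →L[ℂ] B →L[ℂ] AB} {τ' : B →L[ℂ] C →L[ℂ] BC} {m : AB →L[ℂ] C →L[ℂ] E}
    {m' : A →L[ℂ] BC →L[ℂ] E} (hτ : ∀ a b a' b', ⟪τ a b, τ a' b'⟫_ℂ = ⟪a, a'⟫_ℂ * ⟪b, b'⟫_ℂ)
    (hτ' : IsHilbertTensor τ') (hm : ∀ u c u' c', ⟪m u c, m u' c'⟫_ℂ = ⟪u, u'⟫_ℂ * ⟪c, c'⟫_ℂ)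
    (hdense : Dense (Submodule.span ℂ
      (Set.range fun p : (A × B) × C => m (τ p.1.1 p.1.2) p.2) : Set E))
    (hassoc : ∀ a b c, m (τ a b) c = m' a (τ' b c)) : IsHilbertTensor m' := by
  refine ⟨fun a v a' v' => ?_, hdense.mono (Submodule.span_mono ?_)⟩
  · have := inner_apply_apply_eq_of_dense_span hτ'.dense_span (f := m' a) (g := m' a')
      (f' := ContinuousLinearMap.id ℂ BC) (g' := ⟪a, a'⟫_ℂ • ContinuousLinearMap.id ℂ BC) ?_ v v'
    · simpa [inner_smul_right] using this
    rintro _ ⟨⟨b, c⟩, rfl⟩ _ ⟨⟨b', c'⟩, rfl⟩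
    simp only [← hassoc, hm, hτ, hτ'.inner_apply_apply, smul_apply,
      ContinuousLinearMap.id_apply, inner_smul_right]
    ring
  · rintro _ ⟨⟨⟨a, b⟩, c⟩, rfl⟩
    exact ⟨(a, τ' b c), (hassoc a b c).symm⟩

theorem semiconj_ampliation (hμ : IsHilbertTensor μ) {L : (B →L[ℂ] B) → (E →L[ℂ] E)}
    (hL : ∀ X a b, L X (μ a b) = μ a (X b)) {K : E →ₗᵢ⋆[ℂ] E} {JA : A →ₗᵢ⋆[ℂ] A}
    {JB : B →ₗᵢ⋆[ℂ] B} (hK : ∀ a b, K (μ a b) = μ (JA a) (JB b)) {X Y : B →L[ℂ] B}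
    (hXY : Function.Semiconj JB X Y) : Function.Semiconj K (L X) (L Y) := fun x =>
  congr($(hμ.ext (f := K.toContinuousLinearMap.comp (L X))
    (g := (L Y).comp K.toContinuousLinearMap) fun a b => by simp [hL, hK, hXY.eq]) x)

variable [CompleteSpace E]

theorem exists_conjLinearIsometry (hμ : IsHilbertTensor μ) (JA : A →ₗᵢ⋆[ℂ] A)
    (JB : B →ₗᵢ⋆[ℂ] B) : ∃ K : E →ₗᵢ⋆[ℂ] E, ∀ a b, K (μ a b) = μ (JA a) (JB b) := by
  obtain ⟨K, hK⟩ := exists_conjLinearIsometry_apply_eq hμ.dense_span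
    (k := fun p : A × B => μ (JA p.1) (JB p.2)) fun p q => by
      simp [hμ.inner_apply_apply, LinearIsometry.inner_map_map_conj]
  exact ⟨K, fun a b => hK (a, b)⟩

section Swap

variable {ν : A →L[ℂ] A →L[ℂ] E} {S : E →L[ℂ] E}

theorem isSelfAdjoint_of_swap (hν : IsHilbertTensor ν) (hS : ∀ a b, S (ν a b) = ν b a) :
    IsSelfAdjoint S := by
  rw [isSelfAdjoint_iff, ContinuousLinearMap.star_eq_adjoint, eq_comm,
    ContinuousLinearMap.eq_adjoint_iff]
  refine inner_apply_apply_eq_of_dense_span hν.dense_span (g := ContinuousLinearMap.id ℂ E)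
    (f' := ContinuousLinearMap.id ℂ E) ?_
  rintro _ ⟨⟨a, b⟩, rfl⟩ _ ⟨⟨a', b'⟩, rfl⟩
  simp [hS, hν.inner_apply_apply, mul_comm]

theorem mem_unitary_of_swap (hν : IsHilbertTensor ν) (hS : ∀ a b, S (ν a b) = ν b a) :
    S ∈ unitary (E →L[ℂ] E) := by
  have hSS : S * S = 1 := hν.ext fun a b => by simp [hS]
  rw [Unitary.mem_iff, (hν.isSelfAdjoint_of_swap hS).star_eq]
  exact ⟨hSS, hSS⟩

end Swap

variable [CompleteSpace B]

def ampliation (hμ : IsHilbertTensor μ) (L : (B →L[ℂ] B) → (E →L[ℂ] E))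
    (hL : ∀ X a b, L X (μ a b) = μ a (X b)) : (B →L[ℂ] B) →⋆ₐ[ℂ] (E →L[ℂ] E) where
  toFun := L
  map_one' := hμ.ext fun a b => by simp [hL]
  map_mul' X Y := hμ.ext fun a b => by simp [hL]
  map_zero' := hμ.ext fun a b => by simp [hL]
  map_add' X Y := hμ.ext fun a b => by simp [hL]
  commutes' c := hμ.ext fun a b => by simp [hL, Algebra.algebraMap_eq_smul_one]
  map_star' X := by
    simp only [ContinuousLinearMap.star_eq_adjoint]
    rw [ContinuousLinearMap.eq_adjoint_iff]
    refine inner_apply_apply_eq_of_dense_span hμ.dense_span (g := ContinuousLinearMap.id ℂ E)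
      (f' := ContinuousLinearMap.id ℂ E) ?_
    rintro _ ⟨⟨a, b⟩, rfl⟩ _ ⟨⟨a', b'⟩, rfl⟩
    simp [hL, hμ.inner_apply_apply, ContinuousLinearMap.adjoint_inner_left]

end IsHilbertTensor

end HilbertTensor

section Unitary

variable {E : Type*} [NormedAddCommGroup E] [InnerProductSpace ℂ E] [CompleteSpace E]

local notation "𝔘" => unitary (E →L[ℂ] E)

theorem mem_unitary_of_apply_eq_conj (J : E →ₗᵢ⋆[ℂ] E) (hJ : Function.Involutive J)
    {U V : E →L[ℂ] E} (hU : U ∈ 𝔘) (hV : ∀ x, V x = J (U (J x))) : V ∈ 𝔘 := by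
  let e : E ≃ₗᵢ[ℂ] E := LinearIsometryEquiv.ofSurjective
    ⟨V.toLinearMap, fun x => by simp [hV, ContinuousLinearMap.norm_map_of_mem_unitary hU]⟩
    fun y => ⟨J (star U (J y)), by
      simp [hV, hJ _, ← mul_apply_eq_comp U, Unitary.mul_star_self_of_mem hU]⟩
  exact (Unitary.linearIsometryEquiv.symm e).property

theorem inner_map_star_apply_of_commute {L P : E →L[ℂ] E} (hLP : Commute L P) (hP : P ∈ 𝔘)
    (x : E) : ⟪L (star P x), star P x⟫_ℂ = ⟪L x, x⟫_ℂ := by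
  have hcomm : L * star P = star P * L := by
    calc L * star P = star P * P * L * star P := by rw [Unitary.star_mul_self_of_mem hP, one_mul]
      _ = star P * L * (P * star P) := by rw [mul_assoc (star P), ← hLP.eq]; noncomm_ring
      _ = star P * L := by rw [Unitary.mul_star_self_of_mem hP, mul_one]
  rw [← mul_apply_eq_comp, hcomm, mul_apply_eq_comp,
    ContinuousLinearMap.inner_map_map_of_mem_unitary (Unitary.star_mem hP)]

theorem norm_sub_apply_eq_norm_star_apply_sub {B : E →L[ℂ] E} (hB : B ∈ 𝔘) (x y : E) :
    ‖x - B y‖ = ‖star B x - y‖ := by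
  rw [← ContinuousLinearMap.norm_map_of_mem_unitary (Unitary.star_mem hB), map_sub,
    ← mul_apply_eq_comp, Unitary.star_mul_self_of_mem hB, one_apply_eq_self]

theorem norm_sub_star_apply_le_of_pentagon {P A B C D V : E →L[ℂ] E} (hP : P ∈ 𝔘)
    (hA : A ∈ 𝔘) (hB : B ∈ 𝔘) (hC : C ∈ 𝔘) (hD : D ∈ 𝔘) (hV : V ∈ 𝔘)
    (hPAB : P * A * B = B * P) (hPCD : P * C * D = D * P) (hDA : Commute D A) (u : E) :
    ‖(C * A * D * V) u - star P ((D * V) u)‖ ≤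
      ‖star B (V u) - u‖ + ‖P u - u‖ + ‖star V (B u) - u‖ := by
  have hAB : A * B = star P * B * P := by
    rw [mul_assoc, ← hPAB, ← mul_assoc, ← mul_assoc, Unitary.star_mul_self_of_mem hP, one_mul]
  have hCD : C * D * star P = star P * D := by
    rw [← one_mul (C * D), ← Unitary.star_mul_self_of_mem hP, mul_assoc (star P), ← mul_assoc P,
      hPCD, mul_assoc, mul_assoc, Unitary.mul_star_self_of_mem hP, mul_one]
  have hCDA : C * A * D * V = C * D * A * V := by
    rw [mul_assoc C A D, ← hDA.eq, ← mul_assoc]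
  have hmid : (C * D * A) (B u) = (C * D * star P * B) (P u) := by
    simp only [← mul_apply_eq_comp, mul_assoc, hAB]
  have hlast : (C * D * star P * B) u = (star P * D) (B u) := by
    rw [hCD, mul_apply_eq_comp]
  have hCDA_mem : C * D * A ∈ 𝔘 := mul_mem (mul_mem hC hD) hA
  have hCDPB_mem : C * D * star P * B ∈ 𝔘 :=
    mul_mem (mul_mem (mul_mem hC hD) (Unitary.star_mem hP)) hB
  have hPD_mem : star P * D ∈ 𝔘 := mul_mem (Unitary.star_mem hP) hD
  calc ‖(C * A * D * V) u - star P ((D * V) u)‖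
      = ‖(C * D * A) (V u) - (star P * D) (V u)‖ := by
        rw [hCDA]; rfl
    _ ≤ ‖(C * D * A) (V u) - (C * D * A) (B u)‖
        + ‖(C * D * star P * B) (P u) - (C * D * star P * B) u‖
        + ‖(star P * D) (B u) - (star P * D) (V u)‖ := by
        rw [← hmid, hlast]
        exact (norm_sub_le_norm_sub_add_norm_sub _ _ _).trans
          (add_le_add_left (norm_sub_le_norm_sub_add_norm_sub _ _ _) _)
    _ = ‖star B (V u) - u‖ + ‖P u - u‖ + ‖star V (B u) - u‖ := by
        rw [← map_sub, ← map_sub, ← map_sub, ContinuousLinearMap.norm_map_of_mem_unitary hCDA_mem,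
          ContinuousLinearMap.norm_map_of_mem_unitary hCDPB_mem,
          ContinuousLinearMap.norm_map_of_mem_unitary hPD_mem,
          norm_sub_apply_eq_norm_star_apply_sub hB, norm_sub_apply_eq_norm_star_apply_sub hV]

theorem norm_inner_sub_inner_le_of_pentagon {L P A B C D V : E →L[ℂ] E} (hP : P ∈ 𝔘)
    (hA : A ∈ 𝔘) (hB : B ∈ 𝔘) (hC : C ∈ 𝔘) (hD : D ∈ 𝔘) (hV : V ∈ 𝔘)
    (hPAB : P * A * B = B * P) (hPCD : P * C * D = D * P) (hDA : Commute D A)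
    (hLP : Commute L P) {u : E} (hu : ‖u‖ ≤ 1) :
    ‖⟪L ((C * A * D * V) u), (C * A * D * V) u⟫_ℂ - ⟪L ((D * V) u), (D * V) u⟫_ℂ‖ ≤
      2 * ‖L‖ * (‖star B (V u) - u‖ + ‖P u - u‖ + ‖star V (B u) - u‖) := by
  have hv : ‖(C * A * D * V) u‖ ≤ 1 := by
    rwa [ContinuousLinearMap.norm_map_of_mem_unitary
      (mul_mem (mul_mem (mul_mem hC hA) hD) hV)]
  have hw : ‖star P ((D * V) u)‖ ≤ 1 := by
    rwa [ContinuousLinearMap.norm_map_of_mem_unitary (Unitary.star_mem hP),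
      ContinuousLinearMap.norm_map_of_mem_unitary (mul_mem hD hV)]
  rw [← inner_map_star_apply_of_commute hLP hP ((D * V) u)]
  calc _ ≤ ‖L‖ * ‖(C * A * D * V) u - star P ((D * V) u)‖
        * (‖(C * A * D * V) u‖ + ‖star P ((D * V) u)‖) := norm_inner_map_self_sub_le _ _ _
    _ ≤ ‖L‖ * (‖star B (V u) - u‖ + ‖P u - u‖ + ‖star V (B u) - u‖) * (1 + 1) := by
        gcongr
        exact norm_sub_star_apply_le_of_pentagon hP hA hB hC hD hV hPAB hPCD hDA u
    _ = _ := by ring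

end Unitary

/-- `m u c = u ⊗ c` and `m' a v = a ⊗ v` realise `H3 = H ⊗ H ⊗ H` with both bracketings, and
`flip` is the flip `Σ` of `H2 = H ⊗ H`. -/
structure TensorLegs (H H2 H3 : Type*) [NormedAddCommGroup H] [InnerProductSpace ℂ H]
    [NormedAddCommGroup H2] [InnerProductSpace ℂ H2] [NormedAddCommGroup H3]
    [InnerProductSpace ℂ H3] where
  τ : H →L[ℂ] H →L[ℂ] H2
  m : H2 →L[ℂ] H →L[ℂ] H3
  m' : H →L[ℂ] H2 →L[ℂ] H3
  isHilbertTensor_τ : IsHilbertTensor τ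
  isHilbertTensor_m : IsHilbertTensor m
  isHilbertTensor_m' : IsHilbertTensor m'
  m_τ : ∀ a b c, m (τ a b) c = m' a (τ b c)
  leg12 : (H2 →L[ℂ] H2) → (H3 →L[ℂ] H3)
  leg23 : (H2 →L[ℂ] H2) → (H3 →L[ℂ] H3)
  leg12_m : ∀ X u c, leg12 X (m u c) = m (X u) c
  leg23_m' : ∀ X a v, leg23 X (m' a v) = m' a (X v)
  flip : H2 →L[ℂ] H2
  flip_τ : ∀ a b, flip (τ a b) = τ b a

namespace TensorLegs

variable {H H2 H3 : Type*} [NormedAddCommGroup H] [InnerProductSpace ℂ H]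
  [NormedAddCommGroup H2] [InnerProductSpace ℂ H2] [NormedAddCommGroup H3] [InnerProductSpace ℂ H3]
  (T : TensorLegs H H2 H3)

def leg13 (X : H2 →L[ℂ] H2) : H3 →L[ℂ] H3 := T.leg12 T.flip * T.leg23 X * T.leg12 T.flip

variable [CompleteSpace H3]

theorem exists_conjLinearIsometry (J C : H →ₗᵢ⋆[ℂ] H) (JJ D : H2 →ₗᵢ⋆[ℂ] H2)
    (hJJ : ∀ a b, JJ (T.τ a b) = T.τ (J a) (J b)) (hD : ∀ a b, D (T.τ a b) = T.τ (J a) (C b)) :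
    ∃ K : H3 →ₗᵢ⋆[ℂ] H3,
      (∀ u c, K (T.m u c) = T.m (JJ u) (C c)) ∧ ∀ a v, K (T.m' a v) = T.m' (J a) (D v) := by
  obtain ⟨K, hK⟩ := T.isHilbertTensor_m.exists_conjLinearIsometry JJ C
  refine ⟨K, hK, fun a v => congr($(T.isHilbertTensor_τ.ext
    (f := K.toContinuousLinearMap.comp (T.m' a)) (g := (T.m' (J a)).comp D.toContinuousLinearMap)
    fun b c => ?_) v)⟩
  simp [← T.m_τ, hK, hJJ, hD]

theorem pentagon_of_conj (J C : H →ₗᵢ⋆[ℂ] H) (JJ D : H2 →ₗᵢ⋆[ℂ] H2)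
    (hJJ : ∀ a b, JJ (T.τ a b) = T.τ (J a) (J b)) (hD : ∀ a b, D (T.τ a b) = T.τ (J a) (C b))
    {W X Y : H2 →L[ℂ] H2} (hX : Function.Semiconj JJ X W) (hY : Function.Semiconj D Y W)
    (hW : T.leg12 W * T.leg13 W * T.leg23 W = T.leg23 W * T.leg12 W) :
    T.leg12 X * T.leg13 Y * T.leg23 Y = T.leg23 Y * T.leg12 X := by
  obtain ⟨K, hKm, hKm'⟩ := T.exists_conjLinearIsometry J C JJ D hJJ hD
  have hflip : Function.Semiconj JJ T.flip T.flip := fun u => congr($(T.isHilbertTensor_τ.ext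
    (f := JJ.toContinuousLinearMap.comp T.flip) (g := T.flip.comp JJ.toContinuousLinearMap)
    fun a b => by simp [T.flip_τ, hJJ]) u)
  have h12 : ∀ {X' W' : H2 →L[ℂ] H2}, Function.Semiconj JJ X' W' →
      Function.Semiconj K (T.leg12 X') (T.leg12 W') :=
    T.isHilbertTensor_m.flip.semiconj_ampliation (fun Z c u => T.leg12_m Z u c)
      (fun c u => hKm u c)
  have h23 : Function.Semiconj K (T.leg23 Y) (T.leg23 W) :=
    T.isHilbertTensor_m'.semiconj_ampliation T.leg23_m' hKm' hY
  have h13 : Function.Semiconj K (T.leg13 Y) (T.leg13 W) := fun x => by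
    simp only [leg13, mul_apply_eq_comp, (h12 hflip).eq, h23.eq]
  exact pentagon_of_semiconj K (h12 hX) h13 h23 hW

variable [CompleteSpace H2]

def leg12Hom : (H2 →L[ℂ] H2) →⋆ₐ[ℂ] (H3 →L[ℂ] H3) :=
  T.isHilbertTensor_m.flip.ampliation T.leg12 fun X c u => T.leg12_m X u c

def leg23Hom : (H2 →L[ℂ] H2) →⋆ₐ[ℂ] (H3 →L[ℂ] H3) :=
  T.isHilbertTensor_m'.ampliation T.leg23 T.leg23_m'

theorem leg12_mem_unitary {X : H2 →L[ℂ] H2} (hX : X ∈ unitary (H2 →L[ℂ] H2)) :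
    T.leg12 X ∈ unitary (H3 →L[ℂ] H3) :=
  Unitary.map_mem T.leg12Hom hX

theorem leg23_mem_unitary {X : H2 →L[ℂ] H2} (hX : X ∈ unitary (H2 →L[ℂ] H2)) :
    T.leg23 X ∈ unitary (H3 →L[ℂ] H3) :=
  Unitary.map_mem T.leg23Hom hX

def flip12 : unitary (H3 →L[ℂ] H3) :=
  ⟨T.leg12 T.flip, T.leg12_mem_unitary (T.isHilbertTensor_τ.mem_unitary_of_swap T.flip_τ)⟩

theorem star_flip12 : star (T.flip12 : H3 →L[ℂ] H3) = T.flip12 :=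
  ((T.isHilbertTensor_τ.isSelfAdjoint_of_swap T.flip_τ).map T.leg12Hom).star_eq

def leg13Hom : (H2 →L[ℂ] H2) →⋆ₐ[ℂ] (H3 →L[ℂ] H3) :=
  (Unitary.conjStarAlgAut ℂ _ T.flip12).toStarAlgHom.comp T.leg23Hom

theorem leg13Hom_apply (X : H2 →L[ℂ] H2) : T.leg13Hom X = T.leg13 X := by
  change (T.flip12 : H3 →L[ℂ] H3) * T.leg23 X * star (T.flip12 : H3 →L[ℂ] H3) = _
  rw [star_flip12]
  rfl

theorem leg13_mem_unitary {X : H2 →L[ℂ] H2} (hX : X ∈ unitary (H2 →L[ℂ] H2)) :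
    T.leg13 X ∈ unitary (H3 →L[ℂ] H3) :=
  T.leg13Hom_apply X ▸ Unitary.map_mem T.leg13Hom hX

theorem norm_leg13_le (X : H2 →L[ℂ] H2) : ‖T.leg13 X‖ ≤ ‖X‖ :=
  T.leg13Hom_apply X ▸ NonUnitalStarAlgHom.norm_apply_le T.leg13Hom X

end TensorLegs

theorem stmt_13_general
    {H H2 H3 : Type*}
    [NormedAddCommGroup H] [InnerProductSpace ℂ H]
    [NormedAddCommGroup H2] [InnerProductSpace ℂ H2] [CompleteSpace H2]
    [NormedAddCommGroup H3] [InnerProductSpace ℂ H3] [CompleteSpace H3]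
    -- the tensor map H × H → H ⊗ H = H2
    (τ : H →L[ℂ] H →L[ℂ] H2)
    (hτinner : ∀ a b c d : H, (inner ℂ (τ a b) (τ c d) : ℂ) = (inner ℂ a c : ℂ) * (inner ℂ b d : ℂ))
    (hτdense : Dense (Submodule.span ℂ (Set.range fun p : H × H => τ p.1 p.2) : Set H2))
    -- the tensor maps (H ⊗ H) × H → H ⊗ H ⊗ H = H3 and H × (H ⊗ H) → H ⊗ H ⊗ H
    (m : H2 →L[ℂ] H →L[ℂ] H3)
    (m' : H →L[ℂ] H2 →L[ℂ] H3)
    (hmm' : ∀ a b c : H, m (τ a b) c = m' a (τ b c))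
    (hminner : ∀ (u v : H2) (c d : H), (inner ℂ (m u c) (m v d) : ℂ) = (inner ℂ u v : ℂ) * (inner ℂ c d : ℂ))
    (hmdense : Dense (Submodule.span ℂ (Set.range fun p : (H × H) × H => m (τ p.1.1 p.1.2) p.2) : Set H3))
    -- the leg maps T ↦ T₁₂ = T ⊗ 1, T ↦ T₂₃ = 1 ⊗ T, T ↦ T₁₃ = (Σ⊗1)(1⊗T)(Σ⊗1)
    (leg12 leg23 leg13 : (H2 →L[ℂ] H2) → (H3 →L[ℂ] H3))
    (hleg12 : ∀ (T : H2 →L[ℂ] H2) (u : H2) (c : H), leg12 T (m u c) = m (T u) c)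
    (hleg23 : ∀ (T : H2 →L[ℂ] H2) (a : H) (v : H2), leg23 T (m' a v) = m' a (T v))
    -- the flip unitary Σ on H ⊗ H
    (Sg : H2 →L[ℂ] H2)
    (hSg : ∀ a b : H, Sg (τ a b) = τ b a)
    (hleg13 : ∀ T : H2 →L[ℂ] H2, leg13 T = leg12 Sg * leg23 T * leg12 Sg)
    -- the multiplicative unitary W, satisfying the pentagonal equation
    (W : H2 →L[ℂ] H2)
    (hWl : W * star W = 1) (hWr : star W * W = 1)
    (hPent : leg12 W * leg13 W * leg23 W = leg23 W * leg12 W)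
    -- J : a conjugate-linear isometric involution of H
    (J : H → H)
    (hJadd : ∀ x y : H, J (x + y) = J x + J y)
    (hJsmul : ∀ (c : ℂ) (x : H), J (c • x) = (starRingEnd ℂ) c • J x)
    (hJnorm : ∀ x : H, ‖J x‖ = ‖x‖)
    -- Jh : a conjugate-linear isometric involution of H
    (Jh : H → H)
    (hJhadd : ∀ x y : H, Jh (x + y) = Jh x + Jh y)
    (hJhsmul : ∀ (c : ℂ) (x : H), Jh (c • x) = (starRingEnd ℂ) c • Jh x)
    (hJhnorm : ∀ x : H, ‖Jh x‖ = ‖x‖)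
    -- JJ : the conjugate-linear involution J⊗J of H ⊗ H
    (JJ : H2 → H2)
    (hJJadd : ∀ x y : H2, JJ (x + y) = JJ x + JJ y)
    (hJJsmul : ∀ (c : ℂ) (x : H2), JJ (c • x) = (starRingEnd ℂ) c • JJ x)
    (hJJnorm : ∀ x : H2, ‖JJ x‖ = ‖x‖)
    (hJJinv : ∀ x : H2, JJ (JJ x) = x)
    (hJJtmul : ∀ a b : H, JJ (τ a b) = τ (J a) (J b))
    -- JJh : the conjugate-linear involution J⊗Ĵ of H ⊗ H
    (JJh : H2 → H2)
    (hJJhadd : ∀ x y : H2, JJh (x + y) = JJh x + JJh y)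
    (hJJhsmul : ∀ (c : ℂ) (x : H2), JJh (c • x) = (starRingEnd ℂ) c • JJh x)
    (hJJhnorm : ∀ x : H2, ‖JJh x‖ = ‖x‖)
    (hJJhinv : ∀ x : H2, JJh (JJh x) = x)
    (hJJhtmul : ∀ a b : H, JJh (τ a b) = τ (J a) (Jh b))
    -- W' = (J⊗J) W (J⊗J), the commutant multiplicative unitary
    (W' : H2 →L[ℂ] H2)
    (hW' : ∀ x : H2, W' x = JJ (W (JJ x)))
    -- W'' = (J⊗Ĵ) W (J⊗Ĵ) (in the quantum group setting, W'' = (W'ᵒᵖ)*)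
    (W'' : H2 →L[ℂ] H2)
    (hW'' : ∀ x : H2, W'' x = JJh (W (JJh x)))
    -- W''₂₃ commutes with W'₁₃
    (hcomm : Commute (leg23 W'') (leg13 W'))
    -- Λ such that Λ₁₃ commutes with W'₁₂
    (Λ : H2 →L[ℂ] H2)
    (hΛcomm : Commute (leg13 Λ) (leg12 W'))
    -- unit vectors ζ, ξ, η; u = ζ⊗ξ⊗η
    (ζ ξ η : H) (hζ : ‖ζ‖ = 1) (hξ : ‖ξ‖ = 1) (hη : ‖η‖ = 1)
    (u : H3) (hu : u = m (τ ζ ξ) η) :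
    ‖((inner ℂ (leg13 Λ ((leg13 W'' * leg13 W' * leg23 W'' * leg23 W) u))
          ((leg13 W'' * leg13 W' * leg23 W'' * leg23 W) u) : ℂ)
        - (inner ℂ (leg13 Λ ((leg23 W'' * leg23 W) u)) ((leg23 W'' * leg23 W) u) : ℂ))‖ ≤
      2 * ‖Λ‖ * (‖star (leg23 W') (leg23 W u) - u‖
        + ‖leg12 W' u - u‖
        + ‖star (leg23 W) (leg23 W' u) - u‖) := by
  have hτ : IsHilbertTensor τ := ⟨hτinner, hτdense⟩
  have hm : IsHilbertTensor m := ⟨fun u c v d => hminner u v c d,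
    hmdense.mono <| Submodule.span_mono <| by
      rintro _ ⟨⟨⟨a, b⟩, c⟩, rfl⟩
      exact ⟨(τ a b, c), rfl⟩⟩
  let T : TensorLegs H H2 H3 := ⟨τ, m, m', hτ, hm, .of_assoc hτinner hτ hm.inner_apply_apply hmdense
    hmm', hmm', leg12, leg23, hleg12, hleg23, Sg, hSg⟩
  obtain rfl : leg13 = T.leg13 := funext hleg13
  let j := conjLinearIsometry J hJadd hJsmul hJnorm
  let jh := conjLinearIsometry Jh hJhadd hJhsmul hJhnorm
  let jj := conjLinearIsometry JJ hJJadd hJJsmul hJJnorm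
  let jjh := conjLinearIsometry JJh hJJhadd hJJhsmul hJJhnorm
  have hW'W : Function.Semiconj jj W' W := fun x => by simp [jj, hW', hJJinv]
  have hW''W : Function.Semiconj jjh W'' W := fun x => by simp [jjh, hW'', hJJhinv]
  have hW : W ∈ unitary (H2 →L[ℂ] H2) := ⟨hWr, hWl⟩
  have hW' := mem_unitary_of_apply_eq_conj jj hJJinv hW hW'
  have hW'' := mem_unitary_of_apply_eq_conj jjh hJJhinv hW hW''
  have hu1 : ‖u‖ ≤ 1 := by
    rw [hu, hm.norm_apply_apply, hτ.norm_apply_apply, hζ, hξ, hη]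
    norm_num
  refine (norm_inner_sub_inner_le_of_pentagon (T.leg12_mem_unitary hW')
    (T.leg13_mem_unitary hW') (T.leg23_mem_unitary hW') (T.leg13_mem_unitary hW'')
    (T.leg23_mem_unitary hW'') (T.leg23_mem_unitary hW)
    (T.pentagon_of_conj j j jj jj hJJtmul hJJtmul hW'W hW'W hPent)
    (T.pentagon_of_conj j jh jj jjh hJJtmul hJJhtmul hW'W hW''W hPent) hcomm hΛcomm hu1).trans ?_
  gcongr
  exact T.norm_leg13_le Λ

theorem stmt_13
    {H H2 H3 : Type*}
    [NormedAddCommGroup H] [InnerProductSpace ℂ H] [CompleteSpace H]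
    [NormedAddCommGroup H2] [InnerProductSpace ℂ H2] [CompleteSpace H2]
    [NormedAddCommGroup H3] [InnerProductSpace ℂ H3] [CompleteSpace H3]
    -- the tensor map H × H → H ⊗ H = H2
    (τ : H →L[ℂ] H →L[ℂ] H2)
    (hτinner : ∀ a b c d : H, (inner ℂ (τ a b) (τ c d) : ℂ) = (inner ℂ a c : ℂ) * (inner ℂ b d : ℂ))
    (hτdense : Dense (Submodule.span ℂ (Set.range fun p : H × H => τ p.1 p.2) : Set H2))
    -- the tensor maps (H ⊗ H) × H → H ⊗ H ⊗ H = H3 and H × (H ⊗ H) → H ⊗ H ⊗ H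
    (m : H2 →L[ℂ] H →L[ℂ] H3)
    (m' : H →L[ℂ] H2 →L[ℂ] H3)
    (hmm' : ∀ a b c : H, m (τ a b) c = m' a (τ b c))
    (hminner : ∀ (u v : H2) (c d : H), (inner ℂ (m u c) (m v d) : ℂ) = (inner ℂ u v : ℂ) * (inner ℂ c d : ℂ))
    (hmdense : Dense (Submodule.span ℂ (Set.range fun p : (H × H) × H => m (τ p.1.1 p.1.2) p.2) : Set H3))
    -- the leg maps T ↦ T₁₂ = T ⊗ 1, T ↦ T₂₃ = 1 ⊗ T, T ↦ T₁₃ = (Σ⊗1)(1⊗T)(Σ⊗1)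
    (leg12 leg23 leg13 : (H2 →L[ℂ] H2) → (H3 →L[ℂ] H3))
    (hleg12 : ∀ (T : H2 →L[ℂ] H2) (u : H2) (c : H), leg12 T (m u c) = m (T u) c)
    (hleg23 : ∀ (T : H2 →L[ℂ] H2) (a : H) (v : H2), leg23 T (m' a v) = m' a (T v))
    -- the flip unitary Σ on H ⊗ H
    (Sg : H2 →L[ℂ] H2)
    (hSg : ∀ a b : H, Sg (τ a b) = τ b a)
    (hleg13 : ∀ T : H2 →L[ℂ] H2, leg13 T = leg12 Sg * leg23 T * leg12 Sg)
    -- the multiplicative unitary W, satisfying the pentagonal equation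
    (W : H2 →L[ℂ] H2)
    (hWl : W * star W = 1) (hWr : star W * W = 1)
    (hPent : leg12 W * leg13 W * leg23 W = leg23 W * leg12 W)
    -- J : a conjugate-linear isometric involution of H
    (J : H → H)
    (hJadd : ∀ x y : H, J (x + y) = J x + J y)
    (hJsmul : ∀ (c : ℂ) (x : H), J (c • x) = (starRingEnd ℂ) c • J x)
    (hJnorm : ∀ x : H, ‖J x‖ = ‖x‖)
    (hJinv : ∀ x : H, J (J x) = x)
    -- Jh : a conjugate-linear isometric involution of H
    (Jh : H → H)
    (hJhadd : ∀ x y : H, Jh (x + y) = Jh x + Jh y)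
    (hJhsmul : ∀ (c : ℂ) (x : H), Jh (c • x) = (starRingEnd ℂ) c • Jh x)
    (hJhnorm : ∀ x : H, ‖Jh x‖ = ‖x‖)
    (hJhinv : ∀ x : H, Jh (Jh x) = x)
    -- JJ : the conjugate-linear involution J⊗J of H ⊗ H
    (JJ : H2 → H2)
    (hJJadd : ∀ x y : H2, JJ (x + y) = JJ x + JJ y)
    (hJJsmul : ∀ (c : ℂ) (x : H2), JJ (c • x) = (starRingEnd ℂ) c • JJ x)
    (hJJnorm : ∀ x : H2, ‖JJ x‖ = ‖x‖)
    (hJJinv : ∀ x : H2, JJ (JJ x) = x)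
    (hJJtmul : ∀ a b : H, JJ (τ a b) = τ (J a) (J b))
    -- JJh : the conjugate-linear involution J⊗Ĵ of H ⊗ H
    (JJh : H2 → H2)
    (hJJhadd : ∀ x y : H2, JJh (x + y) = JJh x + JJh y)
    (hJJhsmul : ∀ (c : ℂ) (x : H2), JJh (c • x) = (starRingEnd ℂ) c • JJh x)
    (hJJhnorm : ∀ x : H2, ‖JJh x‖ = ‖x‖)
    (hJJhinv : ∀ x : H2, JJh (JJh x) = x)
    (hJJhtmul : ∀ a b : H, JJh (τ a b) = τ (J a) (Jh b))
    -- JhJ : the conjugate-linear involution Ĵ⊗J of H ⊗ H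
    (JhJ : H2 → H2)
    (hJhJadd : ∀ x y : H2, JhJ (x + y) = JhJ x + JhJ y)
    (hJhJsmul : ∀ (c : ℂ) (x : H2), JhJ (c • x) = (starRingEnd ℂ) c • JhJ x)
    (hJhJnorm : ∀ x : H2, ‖JhJ x‖ = ‖x‖)
    (hJhJinv : ∀ x : H2, JhJ (JhJ x) = x)
    (hJhJtmul : ∀ a b : H, JhJ (τ a b) = τ (Jh a) (J b))
    -- the assumption W* = (Ĵ⊗J) W (Ĵ⊗J)
    (hWstar : ∀ x : H2, (star W) x = JhJ (W (JhJ x)))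
    -- W' = (J⊗J) W (J⊗J), the commutant multiplicative unitary
    (W' : H2 →L[ℂ] H2)
    (hW' : ∀ x : H2, W' x = JJ (W (JJ x)))
    -- W'' = (J⊗Ĵ) W (J⊗Ĵ) (in the quantum group setting, W'' = (W'ᵒᵖ)*)
    (W'' : H2 →L[ℂ] H2)
    (hW'' : ∀ x : H2, W'' x = JJh (W (JJh x)))
    -- W''₂₃ commutes with W'₁₃
    (hcomm : Commute (leg23 W'') (leg13 W'))
    -- Λ such that Λ₁₃ commutes with W'₁₂
    (Λ : H2 →L[ℂ] H2)
    (hΛcomm : Commute (leg13 Λ) (leg12 W'))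
    -- unit vectors ζ, ξ, η; u = ζ⊗ξ⊗η
    (ζ ξ η : H) (hζ : ‖ζ‖ = 1) (hξ : ‖ξ‖ = 1) (hη : ‖η‖ = 1)
    (u : H3) (hu : u = m (τ ζ ξ) η) :
    ‖((inner ℂ (leg13 Λ ((leg13 W'' * leg13 W' * leg23 W'' * leg23 W) u))
          ((leg13 W'' * leg13 W' * leg23 W'' * leg23 W) u) : ℂ)
        - (inner ℂ (leg13 Λ ((leg23 W'' * leg23 W) u)) ((leg23 W'' * leg23 W) u) : ℂ))‖ ≤
      2 * ‖Λ‖ * (‖star (leg23 W') (leg23 W u) - u‖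
        + ‖leg12 W' u - u‖
        + ‖star (leg23 W) (leg23 W' u) - u‖) :=
  stmt_13_general τ hτinner hτdense m m' hmm' hminner hmdense leg12 leg23 leg13 hleg12 hleg23 Sg hSg
    hleg13 W hWl hWr hPent J hJadd hJsmul hJnorm Jh hJhadd hJhsmul hJhnorm JJ hJJadd hJJsmul hJJnorm
    hJJinv hJJtmul JJh hJJhadd hJJhsmul hJJhnorm hJJhinv hJJhtmul W' hW' W'' hW'' hcomm Λ hΛcomm ζ ξ
    η hζ hξ hη u hu
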